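/- Let Y be an integrable real random variable with continuous distribution, let 0 < w_min ≤ w_max, and let α ∈ (0,1) satisfy w_min·α + w_max·(1−α) = 1, with quantile q = F⁻¹(α). Among all measurable functions w : ℝ → [w_min, w_max] satisfying E[w(Y)] = 1, the functional E[w(Y)·Y] is maximized by w*(y) = w_min·1{y ≤ q} + w_max·1{y > q}; that is, E[w(Y)Y] ≤ w_min·E[Y·1{Y ≤ q}] + w_max·E[Y·1{Y > q}] for all such w. -/

import Mathlib

open MeasureTheory

/-- Extremal-reweighting characterization underlying the sharp MSM bounds:
among measurable weights `w : ℝ → [w_min, w_max]` with `E[w(Y)] = 1`, the functional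
`E[w(Y)·Y]` is maximized by the two-valued weight with threshold at the `α`-quantile `q`,
where `w_min·α + w_max·(1-α) = 1`. -/
theorem extremal_reweighting {Ω : Type*} [MeasurableSpace Ω]
    (P : Measure Ω) [IsProbabilityMeasure P]
    (Y : Ω → ℝ) (hYm : Measurable Y) (hYint : Integrable Y P)
    (hcont : ∀ y : ℝ, P {ω | Y ω = y} = 0)
    (α q : ℝ) (hα : 0 < α ∧ α < 1)
    (hquant : (P {ω | Y ω ≤ q}).toReal = α)
    (wmin wmax : ℝ) (hwmin : 0 < wmin) (hw : wmin ≤ wmax)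
    (hlevel : wmin * α + wmax * (1 - α) = 1)
    (w : ℝ → ℝ) (hwm : Measurable w)
    (hwbd : ∀ y, wmin ≤ w y ∧ w y ≤ wmax)
    (hmean : ∫ ω, w (Y ω) ∂P = 1) :
    ∫ ω, w (Y ω) * Y ω ∂P ≤
      wmin * (∫ ω, (if Y ω ≤ q then Y ω else 0) ∂P) +
      wmax * (∫ ω, (if q < Y ω then Y ω else 0) ∂P) := by
  obtain ⟨hα0, hα1⟩ := hα
  have hs : MeasurableSet {ω | Y ω ≤ q} := measurableSet_le hYm measurable_const
  have hs' : MeasurableSet {ω | q < Y ω} := measurableSet_lt measurable_const hYm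
  set g : ℝ → ℝ := fun y => if y ≤ q then wmin else wmax with hg_def
  have hgm : Measurable g := Measurable.ite measurableSet_Iic measurable_const measurable_const
  have hgbd : ∀ y, wmin ≤ g y ∧ g y ≤ wmax := by
    intro y; by_cases h : y ≤ q <;> simp [hg_def, h, hw, le_refl]
  have hwC : ∀ ω, ‖w (Y ω)‖ ≤ wmax := fun ω => by
    rw [Real.norm_eq_abs, abs_of_pos (lt_of_lt_of_le hwmin (hwbd (Y ω)).1)]
    exact (hwbd (Y ω)).2
  have hgC : ∀ ω, ‖g (Y ω)‖ ≤ wmax := fun ω => by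
    rw [Real.norm_eq_abs, abs_of_pos (lt_of_lt_of_le hwmin (hgbd (Y ω)).1)]
    exact (hgbd (Y ω)).2
  have hYq : Integrable (fun ω => Y ω - q) P := hYint.sub (integrable_const q)
  have hwYq : Integrable (fun ω => w (Y ω) * (Y ω - q)) P :=
    hYq.bdd_mul ((hwm.comp hYm).aestronglyMeasurable) (ae_of_all _ hwC)
  have hgYq : Integrable (fun ω => g (Y ω) * (Y ω - q)) P :=
    hYq.bdd_mul ((hgm.comp hYm).aestronglyMeasurable) (ae_of_all _ hgC)
  have hwYY : Integrable (fun ω => w (Y ω) * Y ω) P :=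
    hYint.bdd_mul ((hwm.comp hYm).aestronglyMeasurable) (ae_of_all _ hwC)
  have hgYY : Integrable (fun ω => g (Y ω) * Y ω) P :=
    hYint.bdd_mul ((hgm.comp hYm).aestronglyMeasurable) (ae_of_all _ hgC)
  have hwint : Integrable (fun ω => w (Y ω)) P := by
    simpa using (integrable_const (1:ℝ)).bdd_mul ((hwm.comp hYm).aestronglyMeasurable) (ae_of_all _ hwC)
  have hgint : Integrable (fun ω => g (Y ω)) P := by
    simpa using (integrable_const (1:ℝ)).bdd_mul ((hgm.comp hYm).aestronglyMeasurable) (ae_of_all _ hgC)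
  -- pointwise comparison
  have hpt : ∀ ω, w (Y ω) * (Y ω - q) ≤ g (Y ω) * (Y ω - q) := by
    intro ω
    by_cases h : Y ω ≤ q
    · have : g (Y ω) = wmin := by simp [hg_def, h]
      rw [this]
      exact mul_le_mul_of_nonpos_right (hwbd (Y ω)).1 (sub_nonpos.2 h)
    · have : g (Y ω) = wmax := by simp [hg_def, h]
      rw [this]
      exact mul_le_mul_of_nonneg_right (hwbd (Y ω)).2 (sub_nonneg.2 (le_of_lt (not_le.1 h)))
  have hmono : ∫ ω, w (Y ω) * (Y ω - q) ∂P ≤ ∫ ω, g (Y ω) * (Y ω - q) ∂P :=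
    integral_mono hwYq hgYq hpt
  -- E[w(Y)(Y-q)] = E[w(Y)Y] - q
  have e1 : ∫ ω, w (Y ω) * (Y ω - q) ∂P = (∫ ω, w (Y ω) * Y ω ∂P) - q := by
    have h : ∀ ω, w (Y ω) * (Y ω - q) = w (Y ω) * Y ω - q * w (Y ω) := by intro; ring
    simp_rw [h]
    rw [integral_sub hwYY (hwint.const_mul q), integral_const_mul, hmean, mul_one]
  -- E[g(Y)] = 1
  have hind : ∫ ω, Set.indicator {ω | Y ω ≤ q} (fun _ => (1:ℝ)) ω ∂P = α := by
    rw [integral_indicator_const (1:ℝ) hs, smul_eq_mul, mul_one]; exact hquant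
  have egmean : ∫ ω, g (Y ω) ∂P = 1 := by
    have h : ∀ ω, g (Y ω) = wmax + (wmin - wmax) *
        Set.indicator {ω | Y ω ≤ q} (fun _ => (1:ℝ)) ω := by
      intro ω
      by_cases h : Y ω ≤ q
      · simp [hg_def, h, Set.indicator_apply, Set.mem_setOf_eq]
      · simp [hg_def, h, Set.indicator_apply, Set.mem_setOf_eq]
    simp_rw [h]
    rw [integral_add (integrable_const wmax)
        (((integrable_const (1:ℝ)).indicator hs).const_mul _),
      integral_const_mul, hind, integral_const]
    simp only [measure_univ, ENNReal.toReal_one, probReal_univ, smul_eq_mul, one_mul]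
    nlinarith
  -- E[g(Y)(Y-q)] = E[g(Y)Y] - q
  have e2 : ∫ ω, g (Y ω) * (Y ω - q) ∂P = (∫ ω, g (Y ω) * Y ω ∂P) - q := by
    have h : ∀ ω, g (Y ω) * (Y ω - q) = g (Y ω) * Y ω - q * g (Y ω) := by intro; ring
    simp_rw [h]
    rw [integral_sub hgYY (hgint.const_mul q), integral_const_mul, egmean, mul_one]
  -- E[g(Y)Y] = wmin*A + wmax*B
  have intA : Integrable (fun ω => if Y ω ≤ q then Y ω else 0) P := by
    exact (hYint.indicator hs).congr (ae_of_all _ fun ω => by simp [Set.indicator_apply])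
  have intB : Integrable (fun ω => if q < Y ω then Y ω else 0) P := by
    exact (hYint.indicator hs').congr (ae_of_all _ fun ω => by simp [Set.indicator_apply])
  have e3 : ∫ ω, g (Y ω) * Y ω ∂P =
      wmin * (∫ ω, (if Y ω ≤ q then Y ω else 0) ∂P) +
      wmax * (∫ ω, (if q < Y ω then Y ω else 0) ∂P) := by
    have h : ∀ ω, g (Y ω) * Y ω =
        wmin * (if Y ω ≤ q then Y ω else 0) + wmax * (if q < Y ω then Y ω else 0) := by
      intro ω
      by_cases h : Y ω ≤ q
      · simp [hg_def, h, not_lt.2 h]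
      · simp [hg_def, h, not_le.1 h]
    simp_rw [h]
    rw [integral_add (intA.const_mul wmin) (intB.const_mul wmax),
      integral_const_mul, integral_const_mul]
  linarith [hmono, e1, e2, e3]
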